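/- There exists a constant c₁ > 0 depending only on n and p (and in particular independent of γ₁ and γ₂) such that for every p-potential F with constants γ₁, γ₂ and induced extra stress S, and for all symmetric matrices B, C ∈ M^{n×n}, one has Σ_{i,j} (S_{ij}(B) − S_{ij}(C)) (B_{ij} − C_{ij}) ≥ c₁ γ₁ (1 + |B|² + |C|²)^{(p−2)/2} |B − C|². -/

import Mathlib

/-!
Along the segment `x t = C + t • (B - C)` the function `φ t = DΦ(x t)[B - C]` has derivative
`D²Φ(x t)[B - C, B - C] ≥ γ₁ (1 + |x t|²)^((p-2)/2) |B - C|² ≥ 0`, and `φ 1 - φ 0` is the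
left-hand side of the claim because `DΦ(X)[V] = S(X) : V` (at `X = 0` since `Φ` is even).
If `|C| ≤ |B|`, then `|B|/2 ≤ |x t| ≤ |B|` for `t ∈ [3/4, 1]`, so `1 + |x t|²` and
`1 + |B|² + |C|²` agree up to a factor `8`, whatever the sign of `p - 2`. Integrating the
lower bound over this quarter of the segment gives `c₁ = min 1 (8 ^ (-(p-2)/2)) / 4`.
-/

open scoped BigOperators

noncomputable section

/-- Frobenius inner product on `n × n` real matrices (represented as functions). -/
def frobInner {n : ℕ} (A B : Fin n → Fin n → ℝ) : ℝ := ∑ i, ∑ j, A i j * B i j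

/-- Frobenius norm. -/
def frobNorm {n : ℕ} (A : Fin n → Fin n → ℝ) : ℝ := Real.sqrt (frobInner A A)

/-- A symmetric matrix. -/
def IsSymmMat {n : ℕ} (A : Fin n → Fin n → ℝ) : Prop := ∀ i j, A i j = A j i

/-- The induced potential `Φ(B) = F(|B|)`. -/
def inducedPot {n : ℕ} (F : ℝ → ℝ) (B : Fin n → Fin n → ℝ) : ℝ := F (frobNorm B)

/-- The extra stress induced by `F`: `S(B) = F'(|B|) B / |B|` for `B ≠ 0`, `S(0) = 0`. -/
def stress {n : ℕ} (F : ℝ → ℝ) (B : Fin n → Fin n → ℝ) : Fin n → Fin n → ℝ :=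
  if B = 0 then 0 else (deriv F (frobNorm B) / frobNorm B) • B

/-- `F` is a `p`-potential with constants `γ₁, γ₂ > 0`. -/
structure IsPPotential (n : ℕ) (p γ₁ γ₂ : ℝ) (F : ℝ → ℝ) : Prop where
  convex : ConvexOn ℝ (Set.Ici (0 : ℝ)) F
  smooth : ContDiffOn ℝ 2 F (Set.Ici (0 : ℝ))
  nonneg : ∀ x : ℝ, 0 ≤ x → 0 ≤ F x
  zero : F 0 = 0
  deriv_zero : deriv F 0 = 0
  gamma₁_pos : 0 < γ₁
  gamma₂_pos : 0 < γ₂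
  lower : ∀ B C : Fin n → Fin n → ℝ, IsSymmMat B → IsSymmMat C →
    γ₁ * (1 + frobNorm B ^ 2) ^ ((p - 2) / 2) * frobNorm C ^ 2 ≤
      iteratedFDeriv ℝ 2 (inducedPot F) B ![C, C]
  upper : ∀ B C D : Fin n → Fin n → ℝ, IsSymmMat B → IsSymmMat C → IsSymmMat D →
    |iteratedFDeriv ℝ 2 (inducedPot F) B ![C, D]| ≤
      γ₂ * (1 + frobNorm B ^ 2) ^ ((p - 2) / 2) * frobNorm C * frobNorm D

open Set

section InnerProductSpace

variable {E : Type*} [NormedAddCommGroup E] [InnerProductSpace ℝ E]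

theorem hasFDerivAt_norm_of_ne_zero {x : E} (hx : x ≠ 0) :
    HasFDerivAt (‖·‖) (‖x‖⁻¹ • innerSL ℝ x) x := by
  have hx2 : (‖x‖ ^ 2) ≠ 0 := by positivity
  have h := (Real.hasDerivAt_sqrt hx2).comp_hasFDerivAt x (hasStrictFDerivAt_norm_sq x).hasFDerivAt
  have hnorm : (‖·‖ : E → ℝ) = fun y => √(‖y‖ ^ 2) :=
    funext fun y => (Real.sqrt_sq (norm_nonneg y)).symm
  rw [hnorm]
  refine h.congr_fderiv ?_
  ext v
  simp only [Real.sqrt_sq (norm_nonneg x), one_div, mul_inv_rev, smul_apply,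
    coe_innerSL_apply, nsmul_eq_mul, Nat.cast_ofNat, smul_eq_mul]
  field_simp

theorem hasFDerivAt_comp_norm {g : ℝ → ℝ} {x : E} (hx : x ≠ 0)
    (hg : DifferentiableAt ℝ g ‖x‖) :
    HasFDerivAt (fun y => g ‖y‖) ((deriv g ‖x‖ / ‖x‖) • innerSL ℝ x) x := by
  refine (hg.hasDerivAt.comp_hasFDerivAt x (hasFDerivAt_norm_of_ne_zero hx)).congr_fderiv ?_
  rw [smul_smul, div_eq_mul_inv]

end InnerProductSpace

section NormedSpace

variable {𝕜 : Type*} [NontriviallyNormedField 𝕜] {E F : Type*} [NormedAddCommGroup E]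
  [NormedSpace 𝕜 E] [NormedAddCommGroup F] [NormedSpace 𝕜 F]

theorem differentiableAt_fderiv_of_iteratedFDeriv_two_ne_zero {f : E → F} {x : E}
    {m : Fin 2 → E} (h : iteratedFDeriv 𝕜 2 f x m ≠ 0) :
    DifferentiableAt 𝕜 (fderiv 𝕜 f) x := by
  by_contra hd
  rw [iteratedFDeriv_two_apply, fderiv_zero_of_not_differentiableAt hd] at h
  exact h rfl

theorem hasDerivAt_fderiv_apply_add_smul {f : E → F} {x v : E} {t : 𝕜}
    (hd : DifferentiableAt 𝕜 (fderiv 𝕜 f) (x + t • v)) :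
    HasDerivAt (fun s : 𝕜 => fderiv 𝕜 f (x + s • v) v)
      (iteratedFDeriv 𝕜 2 f (x + t • v) ![v, v]) t := by
  have hline : HasDerivAt (fun s : 𝕜 => x + s • v) v t := by
    simpa using ((hasDerivAt_id t).smul_const v).const_add x
  rw [iteratedFDeriv_two_apply]
  exact (ContinuousLinearMap.apply 𝕜 F v).hasFDerivAt.comp_hasDerivAt t
    (hd.hasFDerivAt.comp_hasDerivAt t hline)

end NormedSpace

section RealNormedSpace

variable {E F : Type*} [NormedAddCommGroup E] [NormedSpace ℝ E] [NormedAddCommGroup F]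
  [NormedSpace ℝ F]

theorem fderiv_zero_of_even {f : E → F} (hf : ∀ y, f (-y) = f y) : fderiv ℝ f 0 = 0 := by
  have h := (ContinuousLinearEquiv.neg ℝ (M := E)).comp_right_fderiv (f := f) (x := 0)
  rw [show f ∘ ContinuousLinearEquiv.neg ℝ = f from funext hf] at h
  ext v
  have hv : (2 : ℝ) • fderiv ℝ f 0 v = 0 := by
    rw [two_smul]; nth_rw 1 [h]; simp
  exact (smul_eq_zero.1 hv).resolve_left two_ne_zero

end RealNormedSpace

theorem mul_sub_le_sub_of_hasDerivAt {φ q : ℝ → ℝ} {a b c m : ℝ} (hab : a ≤ b) (hbc : b ≤ c)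
    (hφ : ∀ t, HasDerivAt φ (q t) t) (hq : ∀ t ∈ Icc a b, 0 ≤ q t)
    (hm : ∀ t ∈ Icc b c, m ≤ q t) : m * (c - b) ≤ φ c - φ a := by
  have hdiff : Differentiable ℝ φ := fun t => (hφ t).differentiableAt
  have step : ∀ {l r μ : ℝ}, l ≤ r → (∀ t ∈ Icc l r, μ ≤ q t) → μ * (r - l) ≤ φ r - φ l :=
    fun hlr hμ => (convex_Icc _ _).mul_sub_le_image_sub_of_le_deriv hdiff.continuous.continuousOn
      hdiff.differentiableOn
      (fun t ht => (hφ t).deriv ▸ hμ t (interior_subset ht))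
      _ (left_mem_Icc.2 hlr) _ (right_mem_Icc.2 hlr) hlr
  have h₁ := step hab hq
  have h₂ := step hbc hm
  linarith

theorem min_one_rpow_neg_mul_rpow_le {a b k : ℝ} (ha : 0 < a) (hab : a ≤ b) (hba : b ≤ k * a)
    (hk : 0 < k) (e : ℝ) : min 1 (k ^ (-e)) * b ^ e ≤ a ^ e := by
  have hb : 0 ≤ b ^ e := Real.rpow_nonneg (ha.le.trans hab) e
  rcases le_total e 0 with he | he
  · calc min 1 (k ^ (-e)) * b ^ e ≤ 1 * b ^ e := by gcongr; exact min_le_left _ _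
      _ ≤ a ^ e := by rw [one_mul]; exact Real.rpow_le_rpow_of_nonpos ha hab he
  · calc min 1 (k ^ (-e)) * b ^ e ≤ k ^ (-e) * b ^ e := by gcongr; exact min_le_right _ _
      _ = (b / k) ^ e := by
        rw [Real.div_rpow (by linarith) hk.le, Real.rpow_neg hk.le, div_eq_inv_mul]
      _ ≤ a ^ e := by
        gcongr
        · exact div_nonneg (ha.le.trans hab) hk.le
        · rwa [div_le_iff₀' hk]

section Segment

variable {E : Type*} [NormedAddCommGroup E] [NormedSpace ℝ E] {b c : E} {t : ℝ}

theorem norm_add_smul_sub_le (hcb : ‖c‖ ≤ ‖b‖) (ht : t ∈ Icc (0 : ℝ) 1) :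
    ‖c + t • (b - c)‖ ≤ ‖b‖ := by
  rw [show c + t • (b - c) = (1 - t) • c + t • b by module]
  calc ‖(1 - t) • c + t • b‖ ≤ ‖(1 - t) • c‖ + ‖t • b‖ := norm_add_le _ _
    _ = (1 - t) * ‖c‖ + t * ‖b‖ := by
      rw [norm_smul, norm_smul, Real.norm_of_nonneg (by linarith [ht.2]),
        Real.norm_of_nonneg ht.1]
    _ ≤ ‖b‖ := by nlinarith [ht.1, ht.2]

theorem half_norm_le_norm_add_smul_sub (hcb : ‖c‖ ≤ ‖b‖) (ht : t ∈ Icc (3 / 4 : ℝ) 1) :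
    ‖b‖ / 2 ≤ ‖c + t • (b - c)‖ := by
  have hsplit := norm_add_le (c + t • (b - c)) ((1 - t) • (b - c))
  rw [show c + t • (b - c) + (1 - t) • (b - c) = b by module, norm_smul,
    Real.norm_of_nonneg (by linarith [ht.2])] at hsplit
  have hbc : ‖b - c‖ ≤ 2 * ‖b‖ := (norm_sub_le b c).trans (by linarith)
  nlinarith [ht.1, norm_nonneg (b - c)]

theorem min_mul_rpow_le_one_add_sq_norm_add_smul_sub_rpow (hcb : ‖c‖ ≤ ‖b‖)
    (ht : t ∈ Icc (3 / 4 : ℝ) 1) (e : ℝ) :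
    min 1 (8 ^ (-e)) * (1 + ‖b‖ ^ 2 + ‖c‖ ^ 2) ^ e ≤ (1 + ‖c + t • (b - c)‖ ^ 2) ^ e := by
  have hupper := norm_add_smul_sub_le hcb ⟨by linarith [ht.1], ht.2⟩
  have hlower := half_norm_le_norm_add_smul_sub hcb ht
  have hc := norm_nonneg c
  apply min_one_rpow_neg_mul_rpow_le (by positivity) _ _ (by norm_num)
  · nlinarith [norm_nonneg (c + t • (b - c))]
  · nlinarith [norm_nonneg b]

end Segment

section Frobenius

variable {n : ℕ}

def matrixToEuclidean : (Fin n → Fin n → ℝ) →ₗ[ℝ] EuclideanSpace ℝ (Fin n × Fin n) where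
  toFun A := WithLp.toLp 2 fun ij => A ij.1 ij.2
  map_add' _ _ := rfl
  map_smul' _ _ := rfl

@[simp]
theorem matrixToEuclidean_apply (A : Fin n → Fin n → ℝ) (ij : Fin n × Fin n) :
    matrixToEuclidean A ij = A ij.1 ij.2 :=
  rfl

theorem matrixToEuclidean_injective : Function.Injective (matrixToEuclidean (n := n)) :=
  fun _ _ h => funext₂ fun i j => congrArg (· (i, j)) h

theorem frobInner_eq_inner (A B : Fin n → Fin n → ℝ) :
    frobInner A B = inner ℝ (matrixToEuclidean A) (matrixToEuclidean B) := by
  simp [frobInner, PiLp.inner_apply, Fintype.sum_prod_type, mul_comm]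

theorem frobNorm_eq_norm (A : Fin n → Fin n → ℝ) : frobNorm A = ‖matrixToEuclidean A‖ := by
  rw [frobNorm, frobInner_eq_inner, real_inner_self_eq_norm_sq, Real.sqrt_sq (norm_nonneg _)]

theorem frobNorm_pos {A : Fin n → Fin n → ℝ} (hA : A ≠ 0) : 0 < frobNorm A := by
  rw [frobNorm_eq_norm]
  exact norm_pos_iff.2 ((map_ne_zero_iff _ matrixToEuclidean_injective).2 hA)

theorem min_mul_rpow_le_one_add_sq_frobNorm_add_smul_sub_rpow {B C : Fin n → Fin n → ℝ}
    (hCB : frobNorm C ≤ frobNorm B) {t : ℝ} (ht : t ∈ Icc (3 / 4 : ℝ) 1) (e : ℝ) :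
    min 1 (8 ^ (-e)) * (1 + frobNorm B ^ 2 + frobNorm C ^ 2) ^ e ≤
      (1 + frobNorm (C + t • (B - C)) ^ 2) ^ e := by
  simp only [frobNorm_eq_norm, map_add, map_smul, map_sub] at hCB ⊢
  exact min_mul_rpow_le_one_add_sq_norm_add_smul_sub_rpow hCB ht e

theorem fderiv_inducedPot_apply {F : ℝ → ℝ} (hF : ∀ r, 0 < r → DifferentiableAt ℝ F r)
    (x v : Fin n → Fin n → ℝ) : fderiv ℝ (inducedPot F) x v = frobInner (stress F x) v := by
  have hpot : inducedPot F = (fun y => F ‖y‖) ∘ matrixToEuclidean (n := n) := by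
    funext y; simp [inducedPot, frobNorm_eq_norm]
  rcases eq_or_ne x 0 with rfl | hx
  · have heven : ∀ y : Fin n → Fin n → ℝ, inducedPot F (-y) = inducedPot F y := by
      simp [hpot]
    simp [fderiv_zero_of_even heven, stress, frobInner]
  · have hx' : matrixToEuclidean x ≠ 0 := (map_ne_zero_iff _ matrixToEuclidean_injective).2 hx
    have hd := (hasFDerivAt_comp_norm hx' (hF _ (norm_pos_iff.2 hx'))).comp x
      (LinearMap.toContinuousLinearMap matrixToEuclidean).hasFDerivAt
    rw [← hpot] at hd
    simp [hd.fderiv, stress, hx, frobInner_eq_inner, frobNorm_eq_norm, inner_smul_left]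

theorem stress_monotone_of_frobNorm_le {p γ₁ γ₂ : ℝ} {F : ℝ → ℝ}
    (hF : IsPPotential n p γ₁ γ₂ F) {B C : Fin n → Fin n → ℝ} (hB : IsSymmMat B)
    (hC : IsSymmMat C) (hCB : frobNorm C ≤ frobNorm B) :
    min 1 (8 ^ (-((p - 2) / 2))) / 4 * γ₁ * (1 + frobNorm B ^ 2 + frobNorm C ^ 2) ^ ((p - 2) / 2)
      * frobNorm (B - C) ^ 2 ≤ frobInner (stress F B - stress F C) (B - C) := by
  set G := B - C with hG
  rcases eq_or_ne G 0 with hG0 | hG0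
  · simp [hG0, frobNorm, frobInner]
  have hGpos := frobNorm_pos hG0
  have hF' : ∀ r, 0 < r → DifferentiableAt ℝ F r := fun r hr =>
    (hF.smooth.differentiableOn (by norm_num)).differentiableAt (Ici_mem_nhds hr)
  set x : ℝ → Fin n → Fin n → ℝ := fun t => C + t • G
  set q : ℝ → ℝ := fun t => iteratedFDeriv ℝ 2 (inducedPot F) (x t) ![G, G]
  have hq_lower : ∀ t, γ₁ * (1 + frobNorm (x t) ^ 2) ^ ((p - 2) / 2) * frobNorm G ^ 2 ≤ q t :=
    fun t => hF.lower _ _ (fun i j => by simp [x, G, hB i j, hC i j])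
      (fun i j => by simp [G, hB i j, hC i j])
  have hq_pos : ∀ t, 0 < q t := fun t =>
    (by have := hF.gamma₁_pos; positivity : (0 : ℝ) < _).trans_le (hq_lower t)
  -- `iteratedFDeriv` vanishes where `fderiv` is not differentiable, so `q t > 0` forces `D²Φ`
  -- to exist along the segment.
  have hderiv : ∀ t, HasDerivAt (fun s => fderiv ℝ (inducedPot F) (x s) G) (q t) t := fun t =>
    hasDerivAt_fderiv_apply_add_smul
      (differentiableAt_fderiv_of_iteratedFDeriv_two_ne_zero (hq_pos t).ne')
  have hq_near_B : ∀ t ∈ Icc (3 / 4 : ℝ) 1, min 1 (8 ^ (-((p - 2) / 2))) * γ₁ *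
      (1 + frobNorm B ^ 2 + frobNorm C ^ 2) ^ ((p - 2) / 2) * frobNorm G ^ 2 ≤ q t := by
    intro t ht
    have hweight := min_mul_rpow_le_one_add_sq_frobNorm_add_smul_sub_rpow hCB ht ((p - 2) / 2)
    have := hF.gamma₁_pos
    calc _ = γ₁ * (min 1 (8 ^ (-((p - 2) / 2))) *
          (1 + frobNorm B ^ 2 + frobNorm C ^ 2) ^ ((p - 2) / 2)) * frobNorm G ^ 2 := by ring
      _ ≤ γ₁ * (1 + frobNorm (x t) ^ 2) ^ ((p - 2) / 2) * frobNorm G ^ 2 := by gcongr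
      _ ≤ q t := hq_lower t
  have hincr := mul_sub_le_sub_of_hasDerivAt (a := 0) (b := 3 / 4) (c := 1) (by norm_num)
    (by norm_num) hderiv (fun t _ => (hq_pos t).le) hq_near_B
  simp only [x, fderiv_inducedPot_apply hF', one_smul, zero_smul, add_zero, hG,
    add_sub_cancel] at hincr
  rw [frobInner_eq_inner, map_sub, inner_sub_left, ← frobInner_eq_inner, ← frobInner_eq_inner]
  linarith

end Frobenius

theorem stress_strong_monotonicity_general (n : ℕ) (p : ℝ) :
    ∃ c₁ : ℝ, 0 < c₁ ∧ ∀ (γ₁ γ₂ : ℝ) (F : ℝ → ℝ), IsPPotential n p γ₁ γ₂ F →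
      ∀ B C : Fin n → Fin n → ℝ, IsSymmMat B → IsSymmMat C →
        c₁ * γ₁ * (1 + frobNorm B ^ 2 + frobNorm C ^ 2) ^ ((p - 2) / 2)
            * frobNorm (B - C) ^ 2 ≤
          frobInner (stress F B - stress F C) (B - C) := by
  refine ⟨min 1 (8 ^ (-((p - 2) / 2))) / 4, by positivity, fun γ₁ γ₂ F hF B C hB hC => ?_⟩
  rcases le_total (frobNorm C) (frobNorm B) with hCB | hBC
  · exact stress_monotone_of_frobNorm_le hF hB hC hCB
  · have h := stress_monotone_of_frobNorm_le hF hC hB hBC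
    simp only [frobInner_eq_inner, frobNorm_eq_norm, map_sub, norm_sub_rev] at h ⊢
    rwa [← inner_neg_neg, neg_sub, neg_sub, add_right_comm] at h

/-- Strong monotonicity of the extra stress: there is `c₁ > 0` depending only on `n` and `p`
(independent of `γ₁, γ₂`) such that for every `p`-potential `F` and all symmetric `B, C`,
`(S(B) - S(C)) : (B - C) ≥ c₁ γ₁ (1 + |B|² + |C|²)^((p-2)/2) |B - C|²`. -/
theorem stress_strong_monotonicity (n : ℕ) (hn : 1 ≤ n) (p : ℝ) (hp : 1 < p) :
    ∃ c₁ : ℝ, 0 < c₁ ∧ ∀ (γ₁ γ₂ : ℝ) (F : ℝ → ℝ), IsPPotential n p γ₁ γ₂ F →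
      ∀ B C : Fin n → Fin n → ℝ, IsSymmMat B → IsSymmMat C →
        c₁ * γ₁ * (1 + frobNorm B ^ 2 + frobNorm C ^ 2) ^ ((p - 2) / 2)
            * frobNorm (B - C) ^ 2 ≤
          frobInner (stress F B - stress F C) (B - C) :=
  stress_strong_monotonicity_general n p
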